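/- Let (G,B) be a signed graph with a balancing vertex u, and let H be the graph obtained from (G,B) by splitting u with respect to the (at most two) unbalancing classes at u. Then the cycle matroid M(H) equals the frame matroid F(G,B). -/

import Mathlib

/-! Common definitions: multigraphs, walks, biased graphs, frame matroids. -/

universe u v

structure Multigraph (V : Type u) (E : Type v) where
  inc : E → Sym2 V

namespace Multigraph

variable {V : Type u} {E : Type v}

/-- An edge is a loop if its two endpoints coincide. -/
def IsLoop (G : Multigraph V E) (e : E) : Prop := (G.inc e).IsDiag

/-- The set of links (non-loop edges) incident to a vertex. -/
def delta (G : Multigraph V E) (x : V) : Set E := {e | x ∈ G.inc e ∧ ¬ G.IsLoop e}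

/-- The set of all edges (including loops) incident to a vertex. -/
def deltaPlus (G : Multigraph V E) (x : V) : Set E := {e | x ∈ G.inc e}

/-- The set of vertices incident with an edge of `X`. -/
def VSet (G : Multigraph V E) (X : Set E) : Set V := {x | ∃ e ∈ X, x ∈ G.inc e}

/-- Walks in a multigraph. -/
inductive Walk (G : Multigraph V E) : V → V → Type (max u v) where
  | nil (x : V) : Walk G x x
  | cons {x y z : V} (e : E) (h : G.inc e = s(x, y)) (t : Walk G y z) : Walk G x z

namespace Walk

variable {G : Multigraph V E}

/-- The list of edges of a walk. -/
def edgeList : {x y : V} → G.Walk x y → List E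
  | _, _, .nil _ => []
  | _, _, .cons e _ t => e :: t.edgeList

/-- The list of vertices of a walk (both endpoints included). -/
def vertList : {x y : V} → G.Walk x y → List V
  | _, _, .nil a => [a]
  | a, _, .cons _ _ t => a :: t.vertList

/-- The edge set of a walk. -/
def edgeSet {x y : V} (w : G.Walk x y) : Set E := {e | e ∈ w.edgeList}

/-- A walk is a path if it repeats no vertex. -/
def IsPath {x y : V} (w : G.Walk x y) : Prop := w.vertList.Nodup

/-- A closed walk is a cycle if it is nonempty, repeats no edge and repeats
no vertex except for its starting vertex.  (A loop gives a cycle of length one.) -/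
def IsCycle {x : V} (w : G.Walk x x) : Prop :=
  w.edgeList ≠ [] ∧ w.edgeList.Nodup ∧ w.vertList.dropLast.Nodup

end Walk

/-- `P` is the edge set of a path from `x` to `y`. -/
def IsPathSet (G : Multigraph V E) (x y : V) (P : Set E) : Prop :=
  ∃ w : G.Walk x y, w.IsPath ∧ w.edgeSet = P

/-- `C` is the edge set of a cycle. -/
def IsCycleSet (G : Multigraph V E) (C : Set E) : Prop :=
  ∃ (x : V) (w : G.Walk x x), w.IsCycle ∧ w.edgeSet = C

/-- Two vertices are connected using only edges of `X`. -/
def ConnectedTo (G : Multigraph V E) (X : Set E) (x y : V) : Prop :=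
  ∃ w : G.Walk x y, w.edgeSet ⊆ X

/-- A multigraph is connected if any two vertices are joined by a walk. -/
def ConnectedGraph (G : Multigraph V E) : Prop := ∀ x y : V, Nonempty (G.Walk x y)

/-- The subgraph induced by an edge set `X` is connected. -/
def SubConnected (G : Multigraph V E) (X : Set E) : Prop :=
  ∀ e ∈ X, ∀ f ∈ X, ∃ x y, x ∈ G.inc e ∧ y ∈ G.inc f ∧ G.ConnectedTo X x y

/-- A theta subgraph: two distinct vertices joined by three internally disjoint paths. -/
def IsTheta (G : Multigraph V E) (x y : V) (P₁ P₂ P₃ : Set E) : Prop :=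
  x ≠ y ∧ G.IsPathSet x y P₁ ∧ G.IsPathSet x y P₂ ∧ G.IsPathSet x y P₃ ∧
    Disjoint P₁ P₂ ∧ Disjoint P₂ P₃ ∧ Disjoint P₁ P₃ ∧
    G.VSet P₁ ∩ G.VSet P₂ ⊆ {x, y} ∧ G.VSet P₂ ∩ G.VSet P₃ ⊆ {x, y} ∧
    G.VSet P₁ ∩ G.VSet P₃ ⊆ {x, y}

/-- A proper separation of a multigraph, given as a partition of the edge set:
each side must contain a vertex not met by the other side. -/
def IsProperSep (G : Multigraph V E) (X Y : Set E) : Prop :=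
  X ∪ Y = Set.univ ∧ Disjoint X Y ∧
    (G.VSet X \ G.VSet Y).Nonempty ∧ (G.VSet Y \ G.VSet X).Nonempty

/-- A multigraph is `k`-connected if it is connected and every proper separation
has order at least `k`. -/
def KConnected (G : Multigraph V E) (k : ℕ) : Prop :=
  G.ConnectedGraph ∧ ∀ X Y : Set E, G.IsProperSep X Y → k ≤ (G.VSet X ∩ G.VSet Y).ncard

/-- The connected component of the edge `e` in the subgraph induced by `X`. -/
def edgeComponent (G : Multigraph V E) (X : Set E) (e : E) : Set E :=
  {f | f ∈ X ∧ ∃ x y, x ∈ G.inc e ∧ y ∈ G.inc f ∧ G.ConnectedTo X x y}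

/-- The set of connected components (as edge sets) of the subgraph induced by `X`. -/
def components (G : Multigraph V E) (X : Set E) : Set (Set E) :=
  {D | ∃ e ∈ X, D = G.edgeComponent X e}

/-- One step of rerouting a `u`-`v` path: replace a subpath `R` (with endpoints `x,y`)
of `P` by an `x`-`y` path `Q` that is internally disjoint from `P`. -/
def RerouteStep (G : Multigraph V E) (u v : V) (P P' : Set E) : Prop :=
  G.IsPathSet u v P ∧ G.IsPathSet u v P' ∧
    ∃ x y R Q, G.IsPathSet x y R ∧ G.IsPathSet x y Q ∧ R ⊆ P ∧
      Disjoint Q (P \ R) ∧ G.VSet Q ∩ G.VSet P ⊆ {x, y} ∧ P' = (P \ R) ∪ Q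

end Multigraph

/-- A biased graph: a multigraph together with a collection of balanced cycles
satisfying the theta property. -/
structure BiasedGraph (V : Type u) (E : Type v) extends Multigraph V E where
  Balanced : Set E → Prop
  balanced_isCycle : ∀ C, Balanced C → toMultigraph.IsCycleSet C
  theta_property : ∀ x y P₁ P₂ P₃, toMultigraph.IsTheta x y P₁ P₂ P₃ →
    Balanced (P₁ ∪ P₂) → Balanced (P₂ ∪ P₃) → Balanced (P₁ ∪ P₃)

namespace BiasedGraph

variable {V : Type u} {E : Type v}

/-- A balancing vertex: every unbalanced cycle passes through it. -/
def BalancingVertex (Ω : BiasedGraph V E) (u : V) : Prop :=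
  ∀ C, Ω.toMultigraph.IsCycleSet C → ¬ Ω.Balanced C → ∃ e ∈ C, u ∈ Ω.inc e

/-- `C` is an unbalanced cycle of `Ω`. -/
def IsUnbalancedCycle (Ω : BiasedGraph V E) (C : Set E) : Prop :=
  Ω.toMultigraph.IsCycleSet C ∧ ¬ Ω.Balanced C

/-- Every cycle contained in `X` is balanced. -/
def BalancedSub (Ω : BiasedGraph V E) (X : Set E) : Prop :=
  ∀ C ⊆ X, Ω.toMultigraph.IsCycleSet C → Ω.Balanced C

/-- `e ~ f`: either `e = f` or some balanced cycle contains both. -/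
def LinkRel (Ω : BiasedGraph V E) (e f : E) : Prop :=
  e = f ∨ ∃ C, Ω.toMultigraph.IsCycleSet C ∧ Ω.Balanced C ∧ e ∈ C ∧ f ∈ C

/-- The same relation, with the balanced cycle restricted to lie inside `A`. -/
def LinkRelIn (Ω : BiasedGraph V E) (A : Set E) (e f : E) : Prop :=
  e = f ∨ ∃ C, C ⊆ A ∧ Ω.toMultigraph.IsCycleSet C ∧ Ω.Balanced C ∧ e ∈ C ∧ f ∈ C

/-- `S` is an unbalancing class of `delta u`: a (nonempty) equivalence class of `~`. -/
def IsUnbalancingClass (Ω : BiasedGraph V E) (u : V) (S : Set E) : Prop :=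
  S.Nonempty ∧ S ⊆ Ω.toMultigraph.delta u ∧
    ∀ e ∈ S, ∀ f ∈ Ω.toMultigraph.delta u, (f ∈ S ↔ Ω.LinkRel e f)

/-- `delta u` has exactly three unbalancing classes within the edge set `A`. -/
def HasThreeClassesIn (Ω : BiasedGraph V E) (u : V) (A : Set E) : Prop :=
  ∃ e₁ e₂ e₃, e₁ ∈ Ω.toMultigraph.delta u ∩ A ∧ e₂ ∈ Ω.toMultigraph.delta u ∩ A ∧
    e₃ ∈ Ω.toMultigraph.delta u ∩ A ∧
    ¬ Ω.LinkRelIn A e₁ e₂ ∧ ¬ Ω.LinkRelIn A e₁ e₃ ∧ ¬ Ω.LinkRelIn A e₂ e₃ ∧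
    ∀ f ∈ Ω.toMultigraph.delta u ∩ A,
      Ω.LinkRelIn A f e₁ ∨ Ω.LinkRelIn A f e₂ ∨ Ω.LinkRelIn A f e₃

/-- Tight handcuffs: two unbalanced cycles meeting in exactly one vertex. -/
def IsTightHandcuff (Ω : BiasedGraph V E) (X : Set E) : Prop :=
  ∃ C₁ C₂, Ω.IsUnbalancedCycle C₁ ∧ Ω.IsUnbalancedCycle C₂ ∧ Disjoint C₁ C₂ ∧
    (∃ x, Ω.toMultigraph.VSet C₁ ∩ Ω.toMultigraph.VSet C₂ = {x}) ∧ X = C₁ ∪ C₂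

/-- Loose handcuffs: two vertex-disjoint unbalanced cycles joined by a path meeting
each cycle only in an endpoint. -/
def IsLooseHandcuff (Ω : BiasedGraph V E) (X : Set E) : Prop :=
  ∃ C₁ C₂ P x y, Ω.IsUnbalancedCycle C₁ ∧ Ω.IsUnbalancedCycle C₂ ∧
    Disjoint (Ω.toMultigraph.VSet C₁) (Ω.toMultigraph.VSet C₂) ∧
    Ω.toMultigraph.IsPathSet x y P ∧ Disjoint P (C₁ ∪ C₂) ∧
    Ω.toMultigraph.VSet P ∩ Ω.toMultigraph.VSet C₁ = {x} ∧
    Ω.toMultigraph.VSet P ∩ Ω.toMultigraph.VSet C₂ = {y} ∧ X = C₁ ∪ C₂ ∪ P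

/-- A contrabalanced theta: a theta subgraph all three of whose cycles are unbalanced. -/
def IsContraTheta (Ω : BiasedGraph V E) (X : Set E) : Prop :=
  ∃ x y P₁ P₂ P₃, Ω.toMultigraph.IsTheta x y P₁ P₂ P₃ ∧
    ¬ Ω.Balanced (P₁ ∪ P₂) ∧ ¬ Ω.Balanced (P₂ ∪ P₃) ∧ ¬ Ω.Balanced (P₁ ∪ P₃) ∧
    X = P₁ ∪ P₂ ∪ P₃

/-- The circuits of the frame matroid of a biased graph. -/
def FrameCircuit (Ω : BiasedGraph V E) (X : Set E) : Prop :=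
  (Ω.toMultigraph.IsCycleSet X ∧ Ω.Balanced X) ∨ Ω.IsTightHandcuff X ∨
    Ω.IsLooseHandcuff X ∨ Ω.IsContraTheta X

/-- The number of balanced components of the subgraph induced by `X`. -/
noncomputable def numBalComponents (Ω : BiasedGraph V E) (X : Set E) : ℕ :=
  {D | D ∈ Ω.toMultigraph.components X ∧ Ω.BalancedSub D}.ncard

end BiasedGraph

section MatroidDefs

variable {α : Type*}

/-- A circuit of a matroid: a minimal dependent set. -/
def MCircuit (M : Matroid α) (C : Set α) : Prop :=
  C ⊆ M.E ∧ ¬ M.Indep C ∧ ∀ D ⊂ C, M.Indep D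

/-- A hyperplane: a maximal proper flat. -/
def MHyperplane (M : Matroid α) (H : Set α) : Prop :=
  M.IsFlat H ∧ H ≠ M.E ∧ ∀ F, M.IsFlat F → H ⊆ F → F = H ∨ F = M.E

/-- A cocircuit: a circuit of the dual matroid. -/
def MCocircuit (M : Matroid α) (K : Set α) : Prop := MCircuit (Matroid.dual M) K

open scoped Matroid in
/-- Deletion of a set of elements. -/
def MDelete (M : Matroid α) (D : Set α) : Matroid α := M ↾ (M.E \ D)

/-- Contraction of a set of elements. -/
def MContract (M : Matroid α) (C : Set α) : Matroid α :=
  Matroid.dual (MDelete (Matroid.dual M) C)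

/-- `N` is a minor of `M`. -/
def IsMinorOf (N M : Matroid α) : Prop := ∃ C D, N = MDelete (MContract M C) D

/-- The rank of a set in a matroid (junk value if unbounded). -/
noncomputable def mRank (M : Matroid α) (X : Set α) : ℕ :=
  sSup {n : ℕ | ∃ I, M.Indep I ∧ I ⊆ X ∧ I.ncard = n}

/-- A matroid is connected if any two elements lie on a common circuit. -/
def MatroidConnected (M : Matroid α) : Prop :=
  M.E.Nonempty ∧ ∀ e ∈ M.E, ∀ f ∈ M.E, e = f ∨ ∃ C, MCircuit M C ∧ e ∈ C ∧ f ∈ C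

/-- A `k`-separation of a matroid. -/
def MatroidKSeparation (M : Matroid α) (X Y : Set α) (k : ℕ) : Prop :=
  X ∪ Y = M.E ∧ Disjoint X Y ∧ k ≤ X.ncard ∧ k ≤ Y.ncard ∧
    mRank M X + mRank M Y + 1 = mRank M M.E + k

/-- A matroid is 3-connected if it has no `k`-separation for `k < 3`. -/
def Matroid3Connected (M : Matroid α) : Prop :=
  ∀ X Y (k : ℕ), k ≤ 2 → ¬ MatroidKSeparation M X Y k

/-- A matroid is graphic if its circuits are exactly the cycles of some multigraph. -/
def IsGraphic (M : Matroid α) : Prop :=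
  ∃ (W : Type) (G : Multigraph W α), ∀ C, MCircuit M C ↔ G.IsCycleSet C

/-- A matroid has a `U_{2,4}` minor. -/
def HasU24Minor (M : Matroid α) : Prop :=
  ∃ N : Matroid α, IsMinorOf N M ∧ N.E.ncard = 4 ∧
    ∀ C, MCircuit N C ↔ C ⊆ N.E ∧ C.ncard = 3

end MatroidDefs

/-- `M` is the frame matroid of the biased graph `Ω` (on ground set all of `E`). -/
def IsFrameMatroidOf {V E : Type*} (M : Matroid E) (Ω : BiasedGraph V E) : Prop :=
  M.E = Set.univ ∧ ∀ C, MCircuit M C ↔ Ω.FrameCircuit C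

open scoped Matroid in
/-- A vertex is committed: the complement of its edge star is a connected
nongraphic hyperplane of the frame matroid. -/
def BiasedGraph.IsCommitted {V E : Type*} (Ω : BiasedGraph V E) (M : Matroid E) (x : V) : Prop :=
  MHyperplane M (Ω.toMultigraph.deltaPlus x)ᶜ ∧
    MatroidConnected (M ↾ (Ω.toMultigraph.deltaPlus x)ᶜ) ∧
    ¬ IsGraphic (M ↾ (Ω.toMultigraph.deltaPlus x)ᶜ)

/-- `Ω'` is a roll-up of `Ω` at the balancing vertex `u`: some (possibly empty)
unbalancing class of links at `u` is replaced by unbalanced loops at their other endpoints. -/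
def BiasedGraph.IsRollUpOf {V E : Type*} (Ω' Ω : BiasedGraph V E) (u : V) : Prop :=
  ∃ S : Set E, (S = ∅ ∨ Ω.IsUnbalancingClass u S) ∧
    (∀ e ∉ S, Ω'.inc e = Ω.inc e) ∧
    (∀ e ∈ S, ∃ w, w ≠ u ∧ Ω.inc e = s(u, w) ∧ Ω'.inc e = s(w, w)) ∧
    (∀ C, Ω'.Balanced C ↔ (Ω.Balanced C ∧ C ∩ S = ∅))



/-!
Let `splitProj u : V ⊕ Unit → V` identify the two copies `inl u` and `inr ()` of `u`. Walks of
`H` push forward along it, and walks of `Ω` that do not pass through `u` in their interior lift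
to `H`. The edges of `Sg` are exactly the edges of `H` that switch between the two copies, so a
walk of `H` uses an even number of them iff its ends lie on the same side. Hence balanced cycles
of `Ω` lift to cycles of `H`, unbalanced cycles (all of which pass through `u`) lift to
`inl u`–`inr ()` paths, and a cycle of `H` through both copies splits into two such paths, which
project to a tight handcuff. Loose handcuffs cannot occur because both of their cycles would
contain the balancing vertex, and contrabalanced thetas cannot occur because the parities of the
three cycles of a theta sum to an even number.
-/
lemma List.Nodup.ncard_inter_eq_countP {α : Type*} {l : List α} (hl : l.Nodup) (S : Set α)
    [DecidablePred (· ∈ S)] : ({a | a ∈ l} ∩ S).ncard = l.countP (· ∈ S) := by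
  classical
  have h : {a | a ∈ l} ∩ S = ↑(l.filter (· ∈ S)).toFinset := by ext; simp
  rw [h, Set.ncard_coe_finset, List.toFinset_card_of_nodup (hl.filter _),
    List.countP_eq_length_filter]

namespace Multigraph

variable {V : Type u} {E : Type v} {G : Multigraph V E}

namespace Walk

@[simp] lemma edgeList_nil (x : V) : (nil x : G.Walk x x).edgeList = [] := rfl

@[simp] lemma edgeList_cons {x y z : V} (e : E) (h : G.inc e = s(x, y)) (t : G.Walk y z) :
    (cons e h t).edgeList = e :: t.edgeList := rfl

@[simp] lemma vertList_nil (x : V) : (nil x : G.Walk x x).vertList = [x] := rfl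

@[simp] lemma vertList_cons {x y z : V} (e : E) (h : G.inc e = s(x, y)) (t : G.Walk y z) :
    (cons e h t).vertList = x :: t.vertList := rfl

@[simp] lemma mem_edgeSet {x y : V} (w : G.Walk x y) (e : E) :
    e ∈ w.edgeSet ↔ e ∈ w.edgeList := Iff.rfl

lemma vertList_ne_nil {x y : V} : ∀ w : G.Walk x y, w.vertList ≠ []
  | .nil _ => List.cons_ne_nil _ _
  | .cons _ _ _ => List.cons_ne_nil _ _

lemma vertList_eq_cons {x y : V} : ∀ w : G.Walk x y, ∃ l, w.vertList = x :: l
  | .nil _ => ⟨[], rfl⟩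
  | .cons _ _ t => ⟨t.vertList, rfl⟩

lemma getLast_vertList {x y : V} : ∀ w : G.Walk x y, w.vertList.getLast w.vertList_ne_nil = y
  | .nil _ => rfl
  | .cons _ _ t => by
      simp only [vertList_cons]
      rw [List.getLast_cons t.vertList_ne_nil, getLast_vertList t]

lemma vertList_eq_dropLast_append {x y : V} (w : G.Walk x y) :
    w.vertList = w.vertList.dropLast ++ [y] := by
  conv_lhs => rw [← List.dropLast_append_getLast w.vertList_ne_nil, getLast_vertList]

lemma start_mem_vertList {x y : V} (w : G.Walk x y) : x ∈ w.vertList := by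
  cases w <;> simp

lemma start_mem_dropLast_vertList {x y : V} (w : G.Walk x y) (hw : w.edgeList ≠ []) :
    x ∈ w.vertList.dropLast := by
  cases w with
  | nil => simp at hw
  | cons e h t => simp [List.dropLast_cons_of_ne_nil t.vertList_ne_nil]

lemma edgeList_ne_nil_of_ne {x y : V} (hxy : x ≠ y) : ∀ w : G.Walk x y, w.edgeList ≠ []
  | .nil _ => absurd rfl hxy
  | .cons _ _ _ => List.cons_ne_nil _ _

lemma mem_vertList_of_mem_inc {x y : V} {e : E} {v : V} :
    ∀ w : G.Walk x y, e ∈ w.edgeList → v ∈ G.inc e → v ∈ w.vertList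
  | .nil _, he, _ => by simp at he
  | .cons f h t, he, hv => by
      rcases List.mem_cons.mp he with rfl | he
      · rw [h, Sym2.mem_iff] at hv
        rcases hv with rfl | rfl
        · simp
        · simp [t.start_mem_vertList]
      · simp [mem_vertList_of_mem_inc t he hv]

lemma mem_VSet_of_mem_vertList {x y : V} (w : G.Walk x y) (hw : w.edgeList ≠ []) {v : V}
    (hv : v ∈ w.vertList) : v ∈ G.VSet w.edgeSet := by
  induction w with
  | nil => simp at hw
  | @cons x m z e h t ih =>
      have he : e ∈ (cons e h t).edgeSet := by simp
      rcases List.mem_cons.mp hv with rfl | hv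
      · exact ⟨e, he, by simp [h]⟩
      · cases t with
        | nil =>
            obtain rfl : v = m := by simpa using hv
            exact ⟨e, he, by simp [h]⟩
        | cons f hf t' =>
            obtain ⟨g, hg, hvg⟩ := ih (List.cons_ne_nil _ _) hv
            exact ⟨g, by simp_all, hvg⟩

lemma mem_VSet_iff {x y : V} (w : G.Walk x y) (hw : w.edgeList ≠ []) {v : V} :
    v ∈ G.VSet w.edgeSet ↔ v ∈ w.vertList :=
  ⟨fun ⟨_, he, hv⟩ => w.mem_vertList_of_mem_inc he hv, w.mem_VSet_of_mem_vertList hw⟩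

lemma IsPath.edgeList_nodup {x y : V} {w : G.Walk x y} (hw : w.IsPath) : w.edgeList.Nodup := by
  induction w with
  | nil => simp
  | @cons x m z e h t ih =>
      rw [IsPath, vertList_cons, List.nodup_cons] at hw
      exact List.nodup_cons.mpr
        ⟨fun he => hw.1 (t.mem_vertList_of_mem_inc he (by simp [h])), ih hw.2⟩

def append {x y z : V} : G.Walk x y → G.Walk y z → G.Walk x z
  | .nil _, q => q
  | .cons e h t, q => .cons e h (t.append q)

@[simp] lemma edgeList_append {x y z : V} (p : G.Walk x y) (q : G.Walk y z) :
    (p.append q).edgeList = p.edgeList ++ q.edgeList := by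
  induction p with
  | nil => rfl
  | cons e h t ih => simp [append, ih]

lemma edgeSet_append {x y z : V} (p : G.Walk x y) (q : G.Walk y z) :
    (p.append q).edgeSet = p.edgeSet ∪ q.edgeSet := by
  ext; simp

lemma vertList_append {x y z : V} (p : G.Walk x y) (q : G.Walk y z) :
    (p.append q).vertList = p.vertList.dropLast ++ q.vertList := by
  induction p with
  | nil => rfl
  | cons e h t ih =>
      simp [append, ih, List.dropLast_cons_of_ne_nil t.vertList_ne_nil]

lemma dropLast_vertList_append {x y z : V} (p : G.Walk x y) (q : G.Walk y z) :
    (p.append q).vertList.dropLast = p.vertList.dropLast ++ q.vertList.dropLast := by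
  rw [vertList_append, List.dropLast_append_of_ne_nil q.vertList_ne_nil]

def reverse {x y : V} : G.Walk x y → G.Walk y x
  | .nil x => .nil x
  | .cons e h t => t.reverse.append (.cons e (h.trans Sym2.eq_swap) (.nil _))

@[simp] lemma edgeList_reverse {x y : V} (w : G.Walk x y) :
    w.reverse.edgeList = w.edgeList.reverse := by
  induction w with
  | nil => rfl
  | cons e h t ih => simp [reverse, ih]

@[simp] lemma vertList_reverse {x y : V} (w : G.Walk x y) :
    w.reverse.vertList = w.vertList.reverse := by
  induction w with
  | nil => rfl
  | cons e h t ih =>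
      obtain ⟨l, hl⟩ := t.vertList_eq_cons
      simp [reverse, vertList_append, ih, hl]

lemma edgeSet_reverse {x y : V} (w : G.Walk x y) : w.reverse.edgeSet = w.edgeSet := by
  ext; simp

lemma exists_eq_append_of_mem_vertList [DecidableEq V] {x y v : V} :
    ∀ w : G.Walk x y, v ∈ w.vertList →
      ∃ (p : G.Walk x v) (q : G.Walk v y), w = p.append q
  | .nil _, hv => by
      obtain rfl : v = x := by simpa using hv
      exact ⟨.nil _, .nil _, rfl⟩
  | .cons e h t, hv => by
      by_cases hxv : x = v
      · subst hxv
        exact ⟨.nil _, .cons e h t, rfl⟩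
      · obtain ⟨p, q, rfl⟩ := exists_eq_append_of_mem_vertList t
          ((List.mem_cons.mp hv).resolve_left (Ne.symm hxv))
        exact ⟨.cons e h p, q, rfl⟩

lemma nodup_vertList_iff {x y : V} (w : G.Walk x y) :
    w.vertList.Nodup ↔ w.vertList.dropLast.Nodup ∧ y ∉ w.vertList.dropLast := by
  conv_lhs => rw [vertList_eq_dropLast_append]
  rw [List.nodup_append_comm]
  simp [and_comm]

lemma mem_dropLast_vertList_of_ne {x y v : V} (w : G.Walk x y) (hv : v ∈ w.vertList)
    (hvy : v ≠ y) : v ∈ w.vertList.dropLast := by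
  rw [vertList_eq_dropLast_append, List.mem_append] at hv
  simpa [hvy] using hv

lemma IsCycle.start_not_mem_tail_dropLast {x : V} {w : G.Walk x x} (hw : w.IsCycle) :
    x ∉ w.vertList.tail.dropLast := by
  cases w with
  | nil => exact absurd rfl hw.1
  | cons e h t =>
      have hnd := hw.2.2
      rw [vertList_cons, List.dropLast_cons_of_ne_nil t.vertList_ne_nil] at hnd
      exact (List.nodup_cons.mp hnd).1

variable {V' : Type*} {G' : Multigraph V' E}

def map (f : V → V') (hf : ∀ e, (G.inc e).map f = G'.inc e) {x y : V} :
    G.Walk x y → G'.Walk (f x) (f y)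
  | .nil x => .nil (f x)
  | .cons e h t => .cons e (by rw [← hf, h, Sym2.map_mk]) (t.map f hf)

@[simp] lemma edgeList_map (f : V → V') (hf : ∀ e, (G.inc e).map f = G'.inc e) {x y : V}
    (w : G.Walk x y) : (w.map f hf).edgeList = w.edgeList := by
  induction w with
  | nil => rfl
  | cons e h t ih => simp [map, ih]

@[simp] lemma vertList_map (f : V → V') (hf : ∀ e, (G.inc e).map f = G'.inc e) {x y : V}
    (w : G.Walk x y) : (w.map f hf).vertList = w.vertList.map f := by
  induction w with
  | nil => rfl
  | cons e h t ih => simp [map, ih]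

lemma isCycleSet_of_map (f : V → V') (hf : ∀ e, (G.inc e).map f = G'.inc e) {a b : V}
    (w : G.Walk a b) (hab : f a = f b) (hne : w.edgeList ≠ []) (hnd : w.edgeList.Nodup)
    (hinj : ∀ c ∈ w.vertList.dropLast, ∀ d ∈ w.vertList.dropLast, f c = f d → c = d)
    (hvnd : w.vertList.dropLast.Nodup) : G'.IsCycleSet w.edgeSet := by
  suffices ∀ w' : G'.Walk (f a) (f b), w'.edgeList = w.edgeList →
      w'.vertList = w.vertList.map f → G'.IsCycleSet w.edgeSet from
    this (w.map f hf) (w.edgeList_map f hf) (w.vertList_map f hf)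
  rw [hab]
  intro w' hE hV
  refine ⟨f b, w', ⟨hE ▸ hne, hE ▸ hnd, ?_⟩, by ext; simp [hE]⟩
  rw [hV, ← List.map_dropLast]
  exact hvnd.map_on hinj

end Walk

open Walk

lemma IsCycleSet.exists_isCycle_of_mem_VSet {C : Set E} (hC : G.IsCycleSet C) {v : V}
    (hv : v ∈ G.VSet C) : ∃ w : G.Walk v v, w.IsCycle ∧ w.edgeSet = C := by
  classical
  obtain ⟨x, w, ⟨hne, hnd, hvnd⟩, rfl⟩ := hC
  obtain ⟨p, q, rfl⟩ := w.exists_eq_append_of_mem_vertList ((mem_VSet_iff _ hne).mp hv)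
  rw [edgeList_append] at hne hnd
  rw [dropLast_vertList_append] at hvnd
  refine ⟨q.append p, ⟨?_, ?_, ?_⟩, ?_⟩
  · simpa [and_comm] using hne
  · simpa using List.nodup_append_comm.mp hnd
  · simpa [dropLast_vertList_append] using List.nodup_append_comm.mp hvnd
  · simp [edgeSet_append, Set.union_comm]

lemma IsPathSet.start_mem_VSet {x y : V} {P : Set E} (hP : G.IsPathSet x y P) (hxy : x ≠ y) :
    x ∈ G.VSet P := by
  obtain ⟨w, -, rfl⟩ := hP
  exact w.mem_VSet_of_mem_vertList (edgeList_ne_nil_of_ne hxy w) w.start_mem_vertList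

lemma IsPathSet.isCycleSet_union {x y : V} {P Q : Set E} (hxy : x ≠ y) (hP : G.IsPathSet x y P)
    (hQ : G.IsPathSet x y Q) (hPQ : Disjoint P Q) (hV : G.VSet P ∩ G.VSet Q ⊆ {x, y}) :
    G.IsCycleSet (P ∪ Q) := by
  obtain ⟨p, hp, rfl⟩ := hP
  obtain ⟨q, hq, rfl⟩ := hQ
  have hcross : ∀ c ∈ p.vertList, c ∈ q.vertList → c = x ∨ c = y := fun c hcp hcq =>
    hV ⟨p.mem_VSet_of_mem_vertList (edgeList_ne_nil_of_ne hxy p) hcp,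
      q.mem_VSet_of_mem_vertList (edgeList_ne_nil_of_ne hxy q) hcq⟩
  obtain ⟨l, hl⟩ := q.vertList_eq_cons
  have hql : (x :: l).Nodup := hl ▸ hq
  refine ⟨x, p.append q.reverse, ⟨?_, ?_, ?_⟩, by rw [edgeSet_append, edgeSet_reverse]⟩
  · simp [edgeList_ne_nil_of_ne hxy p]
  · simp only [edgeList_append, edgeList_reverse, List.nodup_append, List.nodup_reverse,
      List.mem_reverse]
    exact ⟨hp.edgeList_nodup, hq.edgeList_nodup,
      fun a ha b hb hab => Set.disjoint_left.mp hPQ ha (hab ▸ hb)⟩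
  · rw [dropLast_vertList_append, vertList_reverse, List.dropLast_reverse, hl, List.tail_cons,
      List.nodup_append]
    refine ⟨(p.nodup_vertList_iff.mp hp).1, List.nodup_reverse.mpr (List.nodup_cons.mp hql).2, ?_⟩
    intro c hcp d hcq hcd
    subst hcd
    rw [List.mem_reverse] at hcq
    rcases hcross c (List.dropLast_subset _ hcp) (hl ▸ List.mem_cons_of_mem x hcq) with rfl | rfl
    · exact (List.nodup_cons.mp hql).1 hcq
    · exact (p.nodup_vertList_iff.mp hp).2 hcp

lemma IsCycleSet.exists_isPathSet_union {C : Set E} (hC : G.IsCycleSet C) {x y : V}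
    (hxy : x ≠ y) (hx : x ∈ G.VSet C) (hy : y ∈ G.VSet C) :
    ∃ P Q, G.IsPathSet x y P ∧ G.IsPathSet x y Q ∧ Disjoint P Q ∧
      G.VSet P ∩ G.VSet Q ⊆ {x, y} ∧ C = P ∪ Q := by
  classical
  obtain ⟨w, ⟨hne, hnd, hvnd⟩, rfl⟩ := hC.exists_isCycle_of_mem_VSet hx
  obtain ⟨p, q, rfl⟩ := w.exists_eq_append_of_mem_vertList ((mem_VSet_iff _ hne).mp hy)
  rw [edgeList_append, List.nodup_append] at hnd
  rw [dropLast_vertList_append, List.nodup_append] at hvnd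
  have hp := edgeList_ne_nil_of_ne hxy p
  have hq := edgeList_ne_nil_of_ne hxy.symm q
  have hxp := p.start_mem_dropLast_vertList hp
  have hyq := q.start_mem_dropLast_vertList hq
  refine ⟨p.edgeSet, q.edgeSet, ⟨p, ?_, rfl⟩, ⟨q.reverse, ?_, q.edgeSet_reverse⟩, ?_, ?_,
    p.edgeSet_append q⟩
  · exact p.nodup_vertList_iff.mpr ⟨hvnd.1, fun hyp => hvnd.2.2 y hyp y hyq rfl⟩
  · rw [IsPath, vertList_reverse, List.nodup_reverse]
    exact q.nodup_vertList_iff.mpr ⟨hvnd.2.1, fun hxq => hvnd.2.2 x hxp x hxq rfl⟩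
  · exact Set.disjoint_left.mpr fun e hep heq => hnd.2.2 e hep e heq rfl
  · rintro v ⟨hvp, hvq⟩
    rw [mem_VSet_iff _ hp] at hvp
    rw [mem_VSet_iff _ hq] at hvq
    by_contra hv
    simp only [Set.mem_insert_iff, Set.mem_singleton_iff, not_or] at hv
    exact hvnd.2.2 v (p.mem_dropLast_vertList_of_ne hvp hv.2) v
      (q.mem_dropLast_vertList_of_ne hvq hv.1) rfl

lemma IsCycleSet.exists_isCycle_not_mem_tail_dropLast {C : Set E} (hC : G.IsCycleSet C) (u : V) :
    ∃ (x : V) (w : G.Walk x x), w.IsCycle ∧ u ∉ w.vertList.tail.dropLast ∧ w.edgeSet = C := by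
  by_cases huC : u ∈ G.VSet C
  · obtain ⟨w, hw, rfl⟩ := hC.exists_isCycle_of_mem_VSet huC
    exact ⟨u, w, hw, hw.start_not_mem_tail_dropLast, rfl⟩
  · obtain ⟨x, w, hw, rfl⟩ := hC
    refine ⟨x, w, hw, fun h => huC ?_, rfl⟩
    exact w.mem_VSet_of_mem_vertList hw.1 (List.tail_subset _ (List.dropLast_subset _ h))

lemma IsPathSet.finite {x y : V} {P : Set E} (hP : G.IsPathSet x y P) : P.Finite := by
  obtain ⟨w, -, rfl⟩ := hP
  exact w.edgeList.finite_toSet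

def splitProj (u : V) : V ⊕ Unit → V := Sum.elim id fun _ => u

@[simp] lemma splitProj_inl (u x : V) : splitProj u (.inl x) = x := rfl

@[simp] lemma splitProj_inr (u : V) : splitProj u (.inr ()) = u := rfl

lemma splitProj_eq_self_iff {u : V} {c : V ⊕ Unit} :
    splitProj u c = u ↔ c = .inl u ∨ c = .inr () := by
  rcases c with x | ⟨⟨⟩⟩ <;> simp

lemma eq_inl_of_splitProj_ne {u : V} {c : V ⊕ Unit} (h : splitProj u c ≠ u) :
    c = .inl (splitProj u c) := by
  rcases c with x | ⟨⟨⟩⟩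
  · rfl
  · exact absurd rfl h

lemma splitProj_injOn {u : V} {s : Set (V ⊕ Unit)} (h : ¬ (.inl u ∈ s ∧ .inr () ∈ s)) :
    s.InjOn (splitProj u) := by
  rintro (x | ⟨⟨⟩⟩) hx (y | ⟨⟨⟩⟩) hy hxy <;> simp_all

lemma eq_of_splitProj_eq {u : V} {a b : V ⊕ Unit} (hab : splitProj u a = splitProj u b)
    (hinr : a = .inr () ↔ b = .inr ()) : a = b := by
  rcases a with x | ⟨⟨⟩⟩ <;> rcases b with y | ⟨⟨⟩⟩ <;> simp_all

/-- `H` arises from `G` by splitting `u` into `inl u` and `inr ()`, the edges of `S` being moved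
to `inr ()`; a loop at `u` in `S` becomes a link `inl u`–`inr ()`. -/
structure IsSplit (G : Multigraph V E) (H : Multigraph (V ⊕ Unit) E) (u : V) (S : Set E) :
    Prop where
  map_inc : ∀ e, (H.inc e).map (splitProj u) = G.inc e
  inc_of_mem : ∀ e ∈ S, ∃ c : V, H.inc e = s(.inl c, .inr ())
  inr_not_mem_inc : ∀ e ∉ S, .inr () ∉ H.inc e

lemma isSplit_of_inc {u : V} {S : Set E} (hS : S ⊆ G.deltaPlus u) {H : Multigraph (V ⊕ Unit) E}
    (h1 : ∀ e, e ∉ S → H.inc e = Sym2.map Sum.inl (G.inc e))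
    (h2 : ∀ e ∈ S, G.IsLoop e → H.inc e = s(Sum.inl u, Sum.inr ()))
    (h3 : ∀ e ∈ S, ¬ G.IsLoop e → ∀ w, G.inc e = s(u, w) →
      H.inc e = s(Sum.inr (), Sum.inl w)) :
    G.IsSplit H u S := by
  have hform : ∀ e ∈ S, ∃ w, G.inc e = s(u, w) ∧ H.inc e = s(.inl w, .inr ()) := by
    intro e he
    obtain ⟨w, hw⟩ := Sym2.mem_iff_exists.mp (hS he)
    by_cases hl : G.IsLoop e
    · obtain rfl : u = w := by rwa [IsLoop, hw, Sym2.mk_isDiag_iff] at hl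
      exact ⟨u, hw, h2 e he hl⟩
    · exact ⟨w, hw, (h3 e he hl w hw).trans Sym2.eq_swap⟩
  refine ⟨fun e => ?_, fun e he => (hform e he).imp fun _ => And.right, fun e he => ?_⟩
  · by_cases he : e ∈ S
    · obtain ⟨w, hG, hH⟩ := hform e he
      rw [hH, hG, Sym2.map_mk, splitProj_inl, splitProj_inr, Sym2.eq_swap]
    · rw [h1 e he, Sym2.map_map]
      exact congrFun Sym2.map_id' _
  · simp [h1 e he, Sym2.mem_map]

namespace IsSplit

variable {H : Multigraph (V ⊕ Unit) E} {u : V} {S : Set E} (hs : G.IsSplit H u S)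
include hs

lemma mem_iff_of_inc_eq {e : E} {a b : V ⊕ Unit} (he : H.inc e = s(a, b)) :
    e ∈ S ↔ ¬ (a = .inr () ↔ b = .inr ()) := by
  by_cases heS : e ∈ S
  · obtain ⟨c, hc⟩ := hs.inc_of_mem e heS
    rw [hc, Sym2.eq_iff] at he
    rcases he with ⟨rfl, rfl⟩ | ⟨rfl, rfl⟩ <;> simp [heS]
  · have hinr := hs.inr_not_mem_inc e heS
    rw [he, Sym2.mem_iff, not_or] at hinr
    have ha : a ≠ .inr () := Ne.symm hinr.1
    have hb : b ≠ .inr () := Ne.symm hinr.2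
    tauto

lemma even_countP_iff [DecidablePred (· ∈ S)] {a b : V ⊕ Unit} (w : H.Walk a b) :
    Even (w.edgeList.countP (· ∈ S)) ↔ (a = .inr () ↔ b = .inr ()) := by
  induction w with
  | nil => simp
  | cons e h t ih =>
      rw [edgeList_cons, List.countP_cons]
      by_cases heS : e ∈ S
      · have := (hs.mem_iff_of_inc_eq h).mp heS
        simp only [heS, decide_true, ↓reduceIte, Nat.even_add_one, ih]
        tauto
      · have := (hs.mem_iff_of_inc_eq h).not.mp heS
        simp only [heS, decide_false, Bool.false_eq_true, ↓reduceIte, add_zero, ih]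
        tauto

lemma even_ncard_iff {a b : V ⊕ Unit} (w : H.Walk a b) (hw : w.edgeList.Nodup) :
    Even (w.edgeSet ∩ S).ncard ↔ (a = .inr () ↔ b = .inr ()) := by
  classical
  rw [← hs.even_countP_iff w, ← hw.ncard_inter_eq_countP]
  rfl

lemma VSet_eq_image (X : Set E) : G.VSet X = splitProj u '' H.VSet X := by
  ext v
  simp only [VSet, ← hs.map_inc, Sym2.mem_map, Set.mem_image, Set.mem_ofPred]
  tauto

lemma exists_lift_edge {e : E} {x y : V} (he : G.inc e = s(x, y)) :
    ∃ a b, H.inc e = s(a, b) ∧ splitProj u a = x ∧ splitProj u b = y := by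
  rw [← hs.map_inc] at he
  induction h : H.inc e using Sym2.ind with
  | _ a b =>
    rw [h, Sym2.map_mk, Sym2.eq_iff] at he
    rcases he with ⟨ha, hb⟩ | ⟨ha, hb⟩
    · exact ⟨a, b, rfl, ha, hb⟩
    · exact ⟨b, a, Sym2.eq_swap, hb, ha⟩

-- An interior vertex `v ≠ u` has the single preimage `inl v`, so consecutive lifted edges meet.
lemma exists_lift {x y : V} (w : G.Walk x y) (hw : w.edgeList ≠ [])
    (hu : u ∉ w.vertList.tail.dropLast) :
    ∃ (a b : V ⊕ Unit) (W : H.Walk a b), splitProj u a = x ∧ splitProj u b = y ∧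
      W.edgeList = w.edgeList ∧ W.vertList.map (splitProj u) = w.vertList := by
  induction w with
  | nil => simp at hw
  | @cons x m z e h t ih =>
    cases t with
    | nil =>
        obtain ⟨a, b, hab, ha, hb⟩ := hs.exists_lift_edge h
        exact ⟨a, b, .cons e hab (.nil b), ha, hb, rfl, by simp [ha, hb]⟩
    | cons f hf t' =>
        have hm : m ≠ u := fun hm =>
          hu (by simp [hm, List.dropLast_cons_of_ne_nil t'.vertList_ne_nil])
        obtain ⟨a', b, W, ha', hb, hE, hV⟩ := ih (List.cons_ne_nil _ _) (fun h' => hu (by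
          simp only [vertList_cons, List.tail_cons] at h' ⊢
          rw [List.dropLast_cons_of_ne_nil t'.vertList_ne_nil]
          exact List.mem_cons_of_mem _ h'))
        obtain ⟨a, c, hac, ha, hc⟩ := hs.exists_lift_edge h
        obtain rfl : c = a' := by
          rw [eq_inl_of_splitProj_ne (c := c) (hc ▸ hm),
            eq_inl_of_splitProj_ne (c := a') (ha' ▸ hm), hc, ha']
        exact ⟨a, b, .cons e hac W, ha, hb, by simp [hE], by simp [ha, hV]⟩

lemma isCycleSet_of_even {C : Set E} (hC : G.IsCycleSet C) (heven : Even (C ∩ S).ncard) :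
    H.IsCycleSet C := by
  obtain ⟨x, w, hw, hu, rfl⟩ := hC.exists_isCycle_not_mem_tail_dropLast u
  obtain ⟨a, b, W, ha, hb, hE, hV⟩ := hs.exists_lift w hw.1 hu
  have hWE : W.edgeSet = w.edgeSet := by ext; simp [hE]
  have hnd : W.edgeList.Nodup := hE ▸ hw.2.1
  rw [← hWE] at heven ⊢
  obtain rfl : a = b :=
    eq_of_splitProj_eq (ha.trans hb.symm) ((hs.even_ncard_iff W hnd).mp heven)
  refine ⟨a, W, ⟨hE ▸ hw.1, hnd, ?_⟩, rfl⟩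
  apply List.Nodup.of_map (splitProj u)
  rw [List.map_dropLast, hV]
  exact hw.2.2

lemma isPathSet_of_not_even {C : Set E} (hC : G.IsCycleSet C) (huC : u ∈ G.VSet C)
    (hodd : ¬ Even (C ∩ S).ncard) : H.IsPathSet (.inl u) (.inr ()) C := by
  obtain ⟨w, hw, rfl⟩ := hC.exists_isCycle_of_mem_VSet huC
  obtain ⟨a, b, W, ha, hb, hE, hV⟩ := hs.exists_lift w hw.1 hw.start_not_mem_tail_dropLast
  have hWE : W.edgeSet = w.edgeSet := by ext; simp [hE]
  have hnd : W.edgeList.Nodup := hE ▸ hw.2.1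
  rw [← hWE, hs.even_ncard_iff W hnd] at hodd
  have hmap : (W.vertList.dropLast.map (splitProj u)).Nodup := by
    rw [List.map_dropLast, hV]
    exact hw.2.2
  have hpath : W.IsPath := by
    refine W.nodup_vertList_iff.mpr ⟨hmap.of_map _, fun hb' => hodd ?_⟩
    obtain rfl := List.inj_on_of_nodup_map hmap (W.start_mem_dropLast_vertList (hE ▸ hw.1)) hb'
      (ha.trans hb.symm)
    exact Iff.rfl
  rcases splitProj_eq_self_iff.mp ha with rfl | rfl <;>
    rcases splitProj_eq_self_iff.mp hb with rfl | rfl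
  · exact absurd Iff.rfl hodd
  · exact ⟨W, hpath, hWE⟩
  · exact ⟨W.reverse, by simpa [IsPath] using hpath, by rw [edgeSet_reverse, hWE]⟩
  · exact absurd Iff.rfl hodd

lemma isCycleSet_even_of_isCycleSet {C : Set E} (hC : H.IsCycleSet C)
    (hC' : ¬ (.inl u ∈ H.VSet C ∧ .inr () ∈ H.VSet C)) :
    G.IsCycleSet C ∧ Even (C ∩ S).ncard := by
  obtain ⟨c, W, hW, rfl⟩ := hC
  rw [mem_VSet_iff W hW.1, mem_VSet_iff W hW.1] at hC'
  refine ⟨W.isCycleSet_of_map _ hs.map_inc rfl hW.1 hW.2.1 ?_ hW.2.2,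
    (hs.even_ncard_iff W hW.2.1).mpr Iff.rfl⟩
  exact fun c hc d hd =>
    splitProj_injOn (s := {c | c ∈ W.vertList}) hC' (List.dropLast_subset _ hc)
      (List.dropLast_subset _ hd)

lemma isCycleSet_not_even_of_isPathSet {P : Set E} (hP : H.IsPathSet (.inl u) (.inr ()) P) :
    G.IsCycleSet P ∧ ¬ Even (P ∩ S).ncard := by
  obtain ⟨W, hW, rfl⟩ := hP
  obtain ⟨hvnd, hinr⟩ := W.nodup_vertList_iff.mp hW
  refine ⟨W.isCycleSet_of_map _ hs.map_inc rfl (edgeList_ne_nil_of_ne Sum.inl_ne_inr W)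
    hW.edgeList_nodup ?_ hvnd, by simp [hs.even_ncard_iff W hW.edgeList_nodup]⟩
  exact fun c hc d hd =>
    splitProj_injOn (s := {c | c ∈ W.vertList.dropLast}) (fun h => hinr h.2) hc hd

end IsSplit

end Multigraph

namespace BiasedGraph

variable {V : Type u} {E : Type v} {Ω : BiasedGraph V E}

open Multigraph

lemma BalancingVertex.mem_VSet {u : V} (hu : Ω.BalancingVertex u) {C : Set E}
    (hC : Ω.IsUnbalancedCycle C) : u ∈ Ω.toMultigraph.VSet C :=
  hu C hC.1 hC.2

lemma BalancingVertex.not_isLooseHandcuff {u : V} (hu : Ω.BalancingVertex u) {X : Set E} :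
    ¬ Ω.IsLooseHandcuff X := by
  rintro ⟨C₁, C₂, -, -, -, hC₁, hC₂, hdisj, -⟩
  exact Set.disjoint_left.mp hdisj (hu.mem_VSet hC₁) (hu.mem_VSet hC₂)

lemma not_isContraTheta_of_balanced_iff_even {S : Set E}
    (hsign : ∀ C, Ω.toMultigraph.IsCycleSet C → (Ω.Balanced C ↔ Even (C ∩ S).ncard))
    {X : Set E} : ¬ Ω.IsContraTheta X := by
  rintro ⟨x, y, P₁, P₂, P₃, ⟨hxy, hP₁, hP₂, hP₃, h₁₂, h₂₃, h₁₃, hV₁₂, hV₂₃, hV₁₃⟩,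
    hb₁₂, hb₂₃, hb₁₃, -⟩
  have parity : ∀ {P Q : Set E}, Ω.toMultigraph.IsPathSet x y P →
      Ω.toMultigraph.IsPathSet x y Q → Disjoint P Q →
      Ω.toMultigraph.VSet P ∩ Ω.toMultigraph.VSet Q ⊆ {x, y} → ¬ Ω.Balanced (P ∪ Q) →
      (Even (P ∩ S).ncard ↔ ¬ Even (Q ∩ S).ncard) := by
    intro P Q hP hQ hPQ hV hb
    rw [hsign _ (hP.isCycleSet_union hxy hQ hPQ hV), Set.union_inter_distrib_right,
      Set.ncard_union_eq (hPQ.mono Set.inter_subset_left Set.inter_subset_left)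
        (hP.finite.inter_of_left _) (hQ.finite.inter_of_left _), Nat.even_add] at hb
    tauto
  have := parity hP₁ hP₂ h₁₂ hV₁₂ hb₁₂
  have := parity hP₂ hP₃ h₂₃ hV₂₃ hb₂₃
  have := parity hP₁ hP₃ h₁₃ hV₁₃ hb₁₃
  tauto

section Split

variable {H : Multigraph (V ⊕ Unit) E} {u : V} {S : Set E} (hs : Ω.toMultigraph.IsSplit H u S)
  (hsign : ∀ C, Ω.toMultigraph.IsCycleSet C → (Ω.Balanced C ↔ Even (C ∩ S).ncard))
  (hu : Ω.BalancingVertex u)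
include hs hsign hu

lemma isUnbalancedCycle_iff_isPathSet {C : Set E} :
    Ω.IsUnbalancedCycle C ↔ H.IsPathSet (.inl u) (.inr ()) C := by
  refine ⟨fun hC => hs.isPathSet_of_not_even hC.1 (hu.mem_VSet hC) fun h => hC.2 ?_,
    fun hP => ?_⟩
  · exact (hsign C hC.1).2 h
  · obtain ⟨hC, hodd⟩ := hs.isCycleSet_not_even_of_isPathSet hP
    exact ⟨hC, fun hb => hodd ((hsign C hC).1 hb)⟩

lemma isCycleSet_of_isTightHandcuff {C : Set E} (hC : Ω.IsTightHandcuff C) : H.IsCycleSet C := by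
  obtain ⟨C₁, C₂, hC₁, hC₂, hdisj, ⟨x, hx⟩, rfl⟩ := hC
  have hux : u ∈ Ω.toMultigraph.VSet C₁ ∩ Ω.toMultigraph.VSet C₂ :=
    ⟨hu.mem_VSet hC₁, hu.mem_VSet hC₂⟩
  obtain rfl : u = x := by rwa [hx, Set.mem_singleton_iff] at hux
  refine ((isUnbalancedCycle_iff_isPathSet hs hsign hu).1 hC₁).isCycleSet_union Sum.inl_ne_inr
    ((isUnbalancedCycle_iff_isPathSet hs hsign hu).1 hC₂) hdisj ?_
  rintro c ⟨hc₁, hc₂⟩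
  have hc : splitProj u c ∈ Ω.toMultigraph.VSet C₁ ∩ Ω.toMultigraph.VSet C₂ := by
    rw [hs.VSet_eq_image, hs.VSet_eq_image]
    exact ⟨Set.mem_image_of_mem _ hc₁, Set.mem_image_of_mem _ hc₂⟩
  rw [hx, Set.mem_singleton_iff, splitProj_eq_self_iff] at hc
  exact hc

lemma isTightHandcuff_of_isCycleSet {C : Set E} (hC : H.IsCycleSet C)
    (hinl : .inl u ∈ H.VSet C) (hinr : .inr () ∈ H.VSet C) : Ω.IsTightHandcuff C := by
  obtain ⟨P, Q, hP, hQ, hPQ, hV, rfl⟩ := hC.exists_isPathSet_union Sum.inl_ne_inr hinl hinr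
  refine ⟨P, Q, (isUnbalancedCycle_iff_isPathSet hs hsign hu).2 hP,
    (isUnbalancedCycle_iff_isPathSet hs hsign hu).2 hQ, hPQ, ⟨u, ?_⟩, rfl⟩
  refine Set.eq_singleton_iff_unique_mem.2 ⟨⟨?_, ?_⟩, ?_⟩
  · rw [hs.VSet_eq_image]
    exact ⟨_, hP.start_mem_VSet Sum.inl_ne_inr, rfl⟩
  · rw [hs.VSet_eq_image]
    exact ⟨_, hQ.start_mem_VSet Sum.inl_ne_inr, rfl⟩
  · rintro v ⟨hvP, hvQ⟩
    by_contra hvu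
    rw [hs.VSet_eq_image] at hvP hvQ
    obtain ⟨c, hc, rfl⟩ := hvP
    obtain ⟨d, hd, hdc⟩ := hvQ
    obtain rfl : d = c := by
      rw [eq_inl_of_splitProj_ne (c := d) (hdc ▸ hvu), eq_inl_of_splitProj_ne (c := c) hvu, hdc]
    exact hvu (splitProj_eq_self_iff.2 (hV ⟨hc, hd⟩))

end Split

end BiasedGraph

/-- Splitting a balancing vertex of a signed graph yields a graph whose
cycle matroid is the frame matroid: the frame circuits are exactly the cycles of `H`. -/
theorem stmt5 {V E : Type*} (Ω : BiasedGraph V E) (u : V)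
    (hu : Ω.BalancingVertex u) (Sg : Set E)
    (hSg : Sg ⊆ Ω.toMultigraph.deltaPlus u)
    (hsign : ∀ C, Ω.toMultigraph.IsCycleSet C → (Ω.Balanced C ↔ Even (C ∩ Sg).ncard))
    (H : Multigraph (V ⊕ Unit) E)
    (h1 : ∀ e, e ∉ Sg → H.inc e = Sym2.map Sum.inl (Ω.inc e))
    (h2 : ∀ e ∈ Sg, Ω.toMultigraph.IsLoop e → H.inc e = s(Sum.inl u, Sum.inr ()))
    (h3 : ∀ e ∈ Sg, ¬ Ω.toMultigraph.IsLoop e → ∀ w, Ω.inc e = s(u, w) →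
      H.inc e = s(Sum.inr (), Sum.inl w)) :
    ∀ C, Ω.FrameCircuit C ↔ H.IsCycleSet C := by
  have hs : Ω.toMultigraph.IsSplit H u Sg := Multigraph.isSplit_of_inc hSg h1 h2 h3
  intro C
  constructor
  · rintro (⟨hC, hb⟩ | hC | hC | hC)
    · exact hs.isCycleSet_of_even hC ((hsign C hC).1 hb)
    · exact BiasedGraph.isCycleSet_of_isTightHandcuff hs hsign hu hC
    · exact absurd hC hu.not_isLooseHandcuff
    · exact absurd hC (BiasedGraph.not_isContraTheta_of_balanced_iff_even hsign)
  · intro hC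
    by_cases hboth : .inl u ∈ H.VSet C ∧ .inr () ∈ H.VSet C
    · exact Or.inr (Or.inl
        (BiasedGraph.isTightHandcuff_of_isCycleSet hs hsign hu hC hboth.1 hboth.2))
    · obtain ⟨hC', heven⟩ := hs.isCycleSet_even_of_isCycleSet hC hboth
      exact Or.inl ⟨hC', (hsign C hC').2 heven⟩
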